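/- arXiv:2412.05455 — 2 statements merged into one kernel-verified Lean document; each statement's English description precedes it below -/
import Mathlib

section
/- For coprime n, s ≥ 2 and any integer k with 0 ≤ k ≤ n·s − n − s, exactly one of k and (n·s − n − s) − k lies in the numerical semigroup ⟨n,s⟩ (symmetry of the semigroup generated by two coprime numbers). -/
/-- Representability criterion: `m` is in `⟨n,s⟩` iff `a·n ≤ m` where
`a = (m · n⁻¹ mod s)` is the canonical coefficient. -/
lemma rep_iff_aux (n s : ℕ) (hs : 2 ≤ s) (h : Nat.Coprime n s) (m : ℕ) :
    (∃ p q : ℕ, m = p * n + q * s) ↔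
      (((m : ZMod s) * ((n : ZMod s))⁻¹).val) * n ≤ m := by
  haveI : NeZero s := ⟨by omega⟩
  constructor
  · rintro ⟨p, q, rfl⟩
    have h1 : ((p * n + q * s : ℕ) : ZMod s) * ((n : ZMod s))⁻¹ = (p : ZMod s) := by
      push_cast
      rw [ZMod.natCast_self, mul_zero, add_zero, mul_assoc,
        ZMod.coe_mul_inv_eq_one n h, mul_one]
    rw [h1, ZMod.val_natCast]
    calc p % s * n ≤ p * n := Nat.mul_le_mul_right n (Nat.mod_le p s)
      _ ≤ p * n + q * s := Nat.le_add_right _ _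
  · intro hle
    set a := (((m : ZMod s) * ((n : ZMod s))⁻¹).val) with ha
    have hcast : ((a * n : ℕ) : ZMod s) = (m : ZMod s) := by
      push_cast
      rw [ZMod.natCast_zmod_val, mul_assoc, mul_comm ((n : ZMod s))⁻¹,
        ZMod.coe_mul_inv_eq_one n h, mul_one]
    have hdvd : s ∣ m - a * n := by
      rw [← ZMod.natCast_eq_zero_iff, Nat.cast_sub hle, hcast, sub_self]
    obtain ⟨q, hq⟩ := hdvd
    exact ⟨a, q, by rw [mul_comm q s]; omega⟩

/-- Symmetry of the numerical semigroup `⟨n,s⟩`: for `0 ≤ k ≤ ns − n − s`,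
exactly one of `k` and `(ns − n − s) − k` is representable as `a·n + b·s`. -/
theorem semigroup_symmetry (n s : ℕ) (hn : 2 ≤ n) (hs : 2 ≤ s) (h : Nat.Coprime n s)
    (k : ℕ) (hk : k ≤ n * s - n - s) :
    Xor' (∃ a b : ℕ, k = a * n + b * s)
      (∃ a b : ℕ, (n * s - n - s) - k = a * n + b * s) := by
  haveI : NeZero s := ⟨by omega⟩
  set F := n * s - n - s with hFdef
  have hns : n + s ≤ n * s := by nlinarith
  have hF : F + n + s = n * s := by omega
  set a := (((k : ZMod s) * ((n : ZMod s))⁻¹).val) with ha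
  set a' := ((((F - k : ℕ) : ZMod s) * ((n : ZMod s))⁻¹).val) with ha'
  -- congruence facts
  have hcast1 : ((a * n : ℕ) : ZMod s) = (k : ZMod s) := by
    push_cast
    rw [ZMod.natCast_zmod_val, mul_assoc, mul_comm ((n : ZMod s))⁻¹,
      ZMod.coe_mul_inv_eq_one n h, mul_one]
  have hcast2 : ((a' * n : ℕ) : ZMod s) = ((F - k : ℕ) : ZMod s) := by
    push_cast
    rw [ZMod.natCast_zmod_val, mul_assoc, mul_comm ((n : ZMod s))⁻¹,
      ZMod.coe_mul_inv_eq_one n h, mul_one]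
  -- a + a' + 1 = s
  have hFs : ((F : ℕ) : ZMod s) = -(n : ZMod s) := by
    have : ((n * s : ℕ) : ZMod s) = 0 := by
      push_cast; rw [ZMod.natCast_self, mul_zero]
    have h2 : ((F : ℕ) : ZMod s) + (n : ZMod s) + (s : ZMod s) = 0 := by
      rw [← Nat.cast_add, ← Nat.cast_add, hF, this]
    rw [ZMod.natCast_self] at h2
    linear_combination h2
  have hsum0 : ((a + a' + 1 : ℕ) : ZMod s) = 0 := by
    push_cast
    rw [ZMod.natCast_zmod_val, ZMod.natCast_zmod_val, Nat.cast_sub hk, hFs]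
    have : (k : ZMod s) * ((n : ZMod s))⁻¹ + (-(n : ZMod s) - (k : ZMod s)) * ((n : ZMod s))⁻¹
        = -((n : ZMod s) * ((n : ZMod s))⁻¹) := by ring
    rw [this, ZMod.coe_mul_inv_eq_one n h]
    ring
  have hdvdsum : s ∣ a + a' + 1 := by
    rwa [ZMod.natCast_eq_zero_iff] at hsum0
  have hav : a < s := ZMod.val_lt _
  have ha'v : a' < s := ZMod.val_lt _
  have hsum : a + a' + 1 = s := by
    rcases hdvdsum with ⟨c, hc⟩
    rcases c with _ | c
    · omega
    · rcases c with _ | c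
      · omega
      · nlinarith
  -- key sum of products
  have hXY : a * n + a' * n = F + s := by
    have : (a + a') * n = (s - 1) * n := by rw [show a + a' = s - 1 by omega]
    rw [add_mul] at this
    rw [this, Nat.sub_one_mul, mul_comm s n]
    omega
  rw [rep_iff_aux n s hs h k, rep_iff_aux n s hs h (F - k), ← ha, ← ha']
  by_cases hc : a * n ≤ k
  · left
    refine ⟨hc, fun hc' => ?_⟩
    omega
  · right
    constructor
    · -- show a' * n ≤ F - k
      by_contra hc'
      push_neg at hc hc'
      have hd1 : s ∣ a * n - k := by
        rw [← ZMod.natCast_eq_zero_iff, Nat.cast_sub (le_of_lt hc), hcast1, sub_self]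
      have hd2 : s ∣ a' * n - (F - k) := by
        rw [← ZMod.natCast_eq_zero_iff, Nat.cast_sub (le_of_lt hc'), hcast2, sub_self]
      have h1 : s ≤ a * n - k := Nat.le_of_dvd (by omega) hd1
      have h2 : s ≤ a' * n - (F - k) := Nat.le_of_dvd (by omega) hd2
      omega
    · intro hcon
      exact hc hcon
end

section
/- The sum of all Weierstrass gaps of the semigroup generated by coprime n and s equals (n−1)(s−1)(2ns − n − s − 1)/12; consequently the Sato weight of the sigma function, defined as minus this quantity plus the sum 0+1+⋯+(g−1) adjusted by the partition, satisfies −wgt σ = (n²−1)(s²−1)/24 when the partition is p = {w_g−(g−1), …, w_2−1, w_1} with gaps w_1 < ⋯ < w_g; equivalently, Σᵢ (w_i − (g−i)) = (n²−1)(s²−1)/24. -/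
open Finset


open Finset

private lemma aux_sum_Icc (s : ℕ) (f : ℕ) :
    2 * ∑ b ∈ Finset.Icc 1 f, (b : ℤ) = (f : ℤ) * (f + 1) := by
  induction f with
  | zero => simp
  | succ f ih =>
    rw [Finset.sum_Icc_succ_top (by omega)]
    push_cast
    push_cast at ih
    ring_nf
    ring_nf at ih
    linarith

private lemma aux_sum_range_id (m : ℕ) :
    2 * ∑ i ∈ Finset.range m, (i : ℤ) = (m : ℤ) * (m - 1) := by
  induction m with
  | zero => simp
  | succ m ih =>
    rw [Finset.sum_range_succ]
    push_cast
    push_cast at ih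
    linarith

private lemma aux_sum_range_sq (m : ℕ) :
    6 * ∑ i ∈ Finset.range m, (i : ℤ) ^ 2 = (m : ℤ) * (m - 1) * (2 * m - 1) := by
  induction m with
  | zero => simp
  | succ m ih =>
    rw [Finset.sum_range_succ]
    push_cast
    push_cast at ih
    ring_nf
    ring_nf at ih
    linarith

private lemma aux_img (n s : ℕ) (hs : 0 < s) (h : Nat.Coprime n s) :
    (Finset.range s).image (fun a => a * n % s) = Finset.range s := by
  have hinj : Set.InjOn (fun a => a * n % s) ↑(Finset.range s) := by
    intro a ha b hb hab
    simp only [Finset.coe_range, Set.mem_Iio] at ha hb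
    have hmod : a * n ≡ b * n [MOD s] := hab
    have := hmod.cancel_right_of_coprime h.symm
    have h2 : a % s = b % s := this
    rwa [Nat.mod_eq_of_lt ha, Nat.mod_eq_of_lt hb] at h2
  apply Finset.eq_of_subset_of_card_le
  · intro x hx
    simp only [Finset.mem_image] at hx
    obtain ⟨a, _, rfl⟩ := hx
    exact Finset.mem_range.mpr (Nat.mod_lt _ hs)
  · rw [Finset.card_image_of_injOn hinj]

private lemma aux_perm (n s : ℕ) (hs : 0 < s) (h : Nat.Coprime n s) (f : ℕ → ℤ) :
    ∑ a ∈ Finset.range s, f (a * n % s) = ∑ a ∈ Finset.range s, f a := by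
  have hinj : ∀ a ∈ Finset.range s, ∀ b ∈ Finset.range s,
      a * n % s = b * n % s → a = b := by
    intro a ha b hb hab
    simp only [Finset.mem_range] at ha hb
    have hmod : a * n ≡ b * n [MOD s] := hab
    have := hmod.cancel_right_of_coprime h.symm
    have h2 : a % s = b % s := this
    rwa [Nat.mod_eq_of_lt ha, Nat.mod_eq_of_lt hb] at h2
  rw [← Finset.sum_image hinj, aux_img n s hs h]

private lemma aux_char (n s : ℕ) (hn : 2 ≤ n) (hs : 2 ≤ s) (h : Nat.Coprime n s) (k : ℕ) :
    (¬ ∃ a b : ℕ, k = a * n + b * s) ↔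
      ∃ a b : ℕ, a < s ∧ 1 ≤ b ∧ k + b * s = a * n := by
  have hs0 : 0 < s := by omega
  constructor
  · intro hnr
    have hk : k % s ∈ Finset.range s := Finset.mem_range.mpr (Nat.mod_lt _ hs0)
    rw [← aux_img n s hs0 h] at hk
    obtain ⟨a, ha, haeq⟩ := Finset.mem_image.mp hk
    have ha' : a < s := Finset.mem_range.mp ha
    rcases le_or_gt (a * n) k with hle | hlt
    · exfalso
      have hmod : a * n ≡ k [MOD s] := haeq
      obtain ⟨c, hc⟩ := (Nat.modEq_iff_dvd' hle).mp hmod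
      have hkk : k = s * c + a * n := (Nat.sub_eq_iff_eq_add hle).mp hc
      exact hnr ⟨a, c, by rw [hkk]; ring⟩
    · have hmod : k ≡ a * n [MOD s] := haeq.symm
      obtain ⟨c, hc⟩ := (Nat.modEq_iff_dvd' (le_of_lt hlt)).mp hmod
      have hkk : a * n = s * c + k := (Nat.sub_eq_iff_eq_add (le_of_lt hlt)).mp hc
      have hc1 : 1 ≤ c := by
        rcases Nat.eq_zero_or_pos c with rfl | hc1
        · simp at hkk; omega
        · exact hc1
      exact ⟨a, c, ha', hc1, by rw [hkk]; ring⟩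
  · rintro ⟨a, b, ha, hb, heq⟩ ⟨a', b', hk⟩
    have h1 : a * n = a' * n + b' * s + b * s := by rw [← heq, hk]
    have hle : a' * n ≤ a * n := by
      rw [h1, add_assoc]; exact Nat.le_add_right _ _
    have ha'a : a' ≤ a := Nat.le_of_mul_le_mul_right hle (by omega)
    have hmod : a' * n ≡ a * n [MOD s] := by
      refine (Nat.modEq_iff_dvd' hle).mpr ⟨b' + b, ?_⟩
      refine (Nat.sub_eq_iff_eq_add hle).mpr ?_
      rw [Nat.mul_add]; linarith
    have := hmod.cancel_right_of_coprime h.symm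
    have h2 : a' % s = a % s := this
    rw [Nat.mod_eq_of_lt (lt_of_le_of_lt ha'a ha), Nat.mod_eq_of_lt ha] at h2
    subst h2
    rw [add_assoc] at h1
    have h3 : b' * s + b * s = 0 := by
      have := Nat.add_left_cancel (h1.symm.trans (Nat.add_zero (a' * n)).symm)
      omega
    have h4 : 0 < b * s := Nat.mul_pos hb hs0
    omega

/-- The sum of the Weierstrass gaps of `⟨n,s⟩` equals `(n−1)(s−1)(2ns−n−s−1)/12`, and
for the increasing enumeration `w₁ < ⋯ < w_g` of the gaps one has
`Σᵢ (wᵢ − (g−i)) = (n²−1)(s²−1)/24` (so `−wgt σ = (n²−1)(s²−1)/24`). -/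

theorem gap_sum_and_sigma_weight (n s g : ℕ) (hn : 2 ≤ n) (hs : 2 ≤ s)
    (h : Nat.Coprime n s) (hg : g = (n - 1) * (s - 1) / 2)
    (w : Fin g → ℕ) (hmono : StrictMono w)
    (hrange : Set.range w = {k : ℕ | ¬ ∃ a b : ℕ, k = a * n + b * s}) :
    (∑ i : Fin g, w i) = (n - 1) * (s - 1) * (2 * n * s - n - s - 1) / 12 ∧
    (∑ i : Fin g, ((w i : ℤ) - ((g : ℤ) - 1 - (i.val : ℤ)))) =
      ((n : ℤ) ^ 2 - 1) * ((s : ℤ) ^ 2 - 1) / 24 := by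
  have hs0 : 0 < s := by omega
  have hn0 : 0 < n := by omega
  set f : ℕ → ℕ := fun a => a * n / s with hf
  set P : Finset ((_ : ℕ) × ℕ) := (Finset.range s).sigma (fun a => Finset.Icc 1 (f a)) with hP
  have hmemP : ∀ p : (_ : ℕ) × ℕ, p ∈ P ↔ p.1 < s ∧ 1 ≤ p.2 ∧ p.2 * s ≤ p.1 * n := by
    intro p
    rw [hP, Finset.mem_sigma, Finset.mem_range, Finset.mem_Icc]
    constructor
    · rintro ⟨h1, h2, h3⟩
      exact ⟨h1, h2, (Nat.le_div_iff_mul_le hs0).mp h3⟩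
    · rintro ⟨h1, h2, h3⟩
      exact ⟨h1, ⟨h2, (Nat.le_div_iff_mul_le hs0).mpr h3⟩⟩
  set Sfin : Finset ℕ := P.image (fun p => p.1 * n - p.2 * s) with hSfin
  have hinjP : ∀ p ∈ P, ∀ q ∈ P, p.1 * n - p.2 * s = q.1 * n - q.2 * s → p = q := by
    intro p hp q hq hpq
    obtain ⟨hp1, hp2, hp3⟩ := (hmemP p).mp hp
    obtain ⟨hq1, hq2, hq3⟩ := (hmemP q).mp hq
    have e1 : (p.1 * n - p.2 * s) + p.2 * s = p.1 * n := Nat.sub_add_cancel hp3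
    have e2 : (q.1 * n - q.2 * s) + q.2 * s = q.1 * n := Nat.sub_add_cancel hq3
    have hm1 : p.1 * n % s = (p.1 * n - p.2 * s) % s := by
      conv_lhs => rw [← e1]
      rw [Nat.add_mul_mod_self_right]
    have hm2 : q.1 * n % s = (q.1 * n - q.2 * s) % s := by
      conv_lhs => rw [← e2]
      rw [Nat.add_mul_mod_self_right]
    have hmod : p.1 * n ≡ q.1 * n [MOD s] := by
      unfold Nat.ModEq
      rw [hm1, hm2, hpq]
    have h2 := hmod.cancel_right_of_coprime h.symm
    have h3 : p.1 % s = q.1 % s := h2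
    rw [Nat.mod_eq_of_lt hp1, Nat.mod_eq_of_lt hq1] at h3
    have h4 : p.2 = q.2 := by
      rw [hpq] at e1
      rw [h3] at e1
      have h5 : p.2 * s = q.2 * s := Nat.add_left_cancel (e1.trans e2.symm)
      exact Nat.eq_of_mul_eq_mul_right hs0 h5
    exact Sigma.ext h3 (heq_of_eq h4)
  have hmem : ∀ k, k ∈ Sfin ↔ ¬ ∃ a b : ℕ, k = a * n + b * s := by
    intro k
    rw [aux_char n s hn hs h k, hSfin, Finset.mem_image]
    constructor
    · rintro ⟨p, hp, rfl⟩
      obtain ⟨h1, h2, h3⟩ := (hmemP p).mp hp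
      exact ⟨p.1, p.2, h1, h2, Nat.sub_add_cancel h3⟩
    · rintro ⟨a, b, ha, hb, heq⟩
      refine ⟨⟨a, b⟩, (hmemP ⟨a, b⟩).mpr ⟨ha, hb, Nat.le.intro (show b * s + k = a * n by omega)⟩, ?_⟩
      simp only
      omega
  have hcoe : ↑Sfin = Set.range w := by
    rw [hrange]
    ext k
    simp only [Finset.mem_coe, Set.mem_setOf_eq, hmem]
  have himage : Finset.image w Finset.univ = Sfin := by
    apply Finset.coe_injective
    rw [Finset.coe_image, Finset.coe_univ, Set.image_univ, hcoe]
  have hsum1 : ∑ k ∈ Sfin, k = ∑ i : Fin g, w i := by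
    rw [← himage, Finset.sum_image (fun x _ y _ hxy => hmono.injective hxy)]
  have hTsig : ∑ k ∈ Sfin, (k : ℤ)
      = ∑ a ∈ Finset.range s, ∑ b ∈ Finset.Icc 1 (f a), ((a : ℤ) * n - (b : ℤ) * s) := by
    rw [hSfin, Finset.sum_image hinjP, hP, Finset.sum_sigma]
    apply Finset.sum_congr rfl
    intro a _
    apply Finset.sum_congr rfl
    intro b hb
    have h3 : b * s ≤ a * n := (Nat.le_div_iff_mul_le hs0).mp (Finset.mem_Icc.mp hb).2
    push_cast [Nat.cast_sub h3]
    ring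
  have hinner : ∀ a ∈ Finset.range s,
      2 * (s : ℤ) * ∑ b ∈ Finset.Icc 1 (f a), ((a : ℤ) * n - (b : ℤ) * s)
      = ((a : ℤ) * n) ^ 2 - (s : ℤ) * ((a : ℤ) * n)
        - ((a * n % s : ℕ) : ℤ) ^ 2 + (s : ℤ) * ((a * n % s : ℕ) : ℤ) := by
    intro a _
    have hdm : (s : ℤ) * ((f a : ℕ) : ℤ) + ((a * n % s : ℕ) : ℤ) = (a : ℤ) * n := by
      have h0 := Nat.div_add_mod (a * n) s
      simp only [hf]
      exact_mod_cast congrArg (fun x : ℕ => (x : ℤ)) h0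
    have hsum : ∑ b ∈ Finset.Icc 1 (f a), ((a : ℤ) * n - (b : ℤ) * s)
        = ((f a : ℕ) : ℤ) * ((a : ℤ) * n) - (s : ℤ) * ∑ b ∈ Finset.Icc 1 (f a), (b : ℤ) := by
      rw [Finset.sum_sub_distrib, Finset.sum_const, Nat.card_Icc, Nat.add_sub_cancel,
        nsmul_eq_mul, Finset.mul_sum]
      congr 1
      apply Finset.sum_congr rfl
      intro b _
      ring
    rw [hsum]
    have hG := aux_sum_Icc s (f a)
    linear_combination (-(s : ℤ) ^ 2) * hG
      + ((a : ℤ) * n - (s : ℤ) * ((f a : ℕ) : ℤ) + ((a * n % s : ℕ) : ℤ) - (s : ℤ)) * hdm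
  have hbig : 2 * (s : ℤ) * ∑ k ∈ Sfin, (k : ℤ)
      = ∑ a ∈ Finset.range s, (((a : ℤ) * n) ^ 2 - (s : ℤ) * ((a : ℤ) * n)
        - ((a * n % s : ℕ) : ℤ) ^ 2 + (s : ℤ) * ((a * n % s : ℕ) : ℤ)) := by
    rw [hTsig, Finset.mul_sum]
    exact Finset.sum_congr rfl hinner
  have hsplit : ∑ a ∈ Finset.range s, (((a : ℤ) * n) ^ 2 - (s : ℤ) * ((a : ℤ) * n)
        - ((a * n % s : ℕ) : ℤ) ^ 2 + (s : ℤ) * ((a * n % s : ℕ) : ℤ))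
      = (n : ℤ) ^ 2 * ∑ a ∈ Finset.range s, (a : ℤ) ^ 2
        - (s : ℤ) * (n : ℤ) * ∑ a ∈ Finset.range s, (a : ℤ)
        - ∑ a ∈ Finset.range s, ((a * n % s : ℕ) : ℤ) ^ 2
        + (s : ℤ) * ∑ a ∈ Finset.range s, ((a * n % s : ℕ) : ℤ) := by
    rw [Finset.mul_sum, Finset.mul_sum, Finset.mul_sum, ← Finset.sum_sub_distrib,
      ← Finset.sum_sub_distrib, ← Finset.sum_add_distrib]
    apply Finset.sum_congr rfl
    intro a _
    ring
  have hp2 : ∑ a ∈ Finset.range s, ((a * n % s : ℕ) : ℤ) ^ 2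
      = ∑ a ∈ Finset.range s, (a : ℤ) ^ 2 := aux_perm n s hs0 h (fun x => (x : ℤ) ^ 2)
  have hp1 : ∑ a ∈ Finset.range s, ((a * n % s : ℕ) : ℤ)
      = ∑ a ∈ Finset.range s, (a : ℤ) := aux_perm n s hs0 h (fun x => (x : ℤ))
  have hG1 := aux_sum_range_id s
  have hG2 := aux_sum_range_sq s
  have hT12 : 12 * ∑ k ∈ Sfin, (k : ℤ)
      = ((n : ℤ) - 1) * ((s : ℤ) - 1) * (2 * (n : ℤ) * (s : ℤ) - (n : ℤ) - (s : ℤ) - 1) := by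
    have hsne : (s : ℤ) ≠ 0 := by exact_mod_cast hs0.ne'
    apply mul_left_cancel₀ hsne
    linear_combination 6 * hbig + 6 * hsplit - 6 * hp2 + 6 * (s : ℤ) * hp1
      + ((n : ℤ) ^ 2 - 1) * hG2 + 3 * (s : ℤ) * (1 - (n : ℤ)) * hG1
  have hc : ∑ k ∈ Sfin, (k : ℤ) = ∑ i : Fin g, ((w i : ℕ) : ℤ) := by
    have h0 : ((∑ k ∈ Sfin, k : ℕ) : ℤ) = ((∑ i : Fin g, w i : ℕ) : ℤ) := by
      exact_mod_cast congrArg (fun x : ℕ => (x : ℤ)) hsum1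
    push_cast at h0
    exact h0
  have l1 : (1 : ℕ) ≤ n := by omega
  have l2 : (1 : ℕ) ≤ s := by omega
  have c1 : 2 * s ≤ n * s := Nat.mul_le_mul_right s hn
  have c2 : n * 2 ≤ n * s := Nat.mul_le_mul_left n hs
  have c3 : 2 * n * s = n * s + n * s := by ring
  have l3 : n ≤ 2 * n * s := by omega
  have l4 : s ≤ 2 * n * s - n := by omega
  have l5 : 1 ≤ 2 * n * s - n - s := by omega
  have hNat : 12 * ∑ i : Fin g, w i = (n - 1) * (s - 1) * (2 * n * s - n - s - 1) := by
    zify [l1, l2, l3, l4, l5]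
    linear_combination hT12 - 12 * hc
  constructor
  · obtain ⟨N, hN⟩ : ∃ N, (n - 1) * (s - 1) * (2 * n * s - n - s - 1) = N := ⟨_, rfl⟩
    rw [hN] at hNat ⊢
    omega
  · have hpar : 2 ∣ (n - 1) * (s - 1) := by
      rcases Nat.even_or_odd n with he | ho
      · have hns : ¬ (2 ∣ s) := by
          intro h2s
          have h2n : 2 ∣ n := he.two_dvd
          have hd := Nat.dvd_gcd h2n h2s
          rw [Nat.Coprime] at h
          rw [h] at hd
          omega
        have hs1 : 2 ∣ s - 1 := by omega
        exact Dvd.dvd.mul_left hs1 _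
      · have hn1 : 2 ∣ n - 1 := by
          have := Nat.odd_iff.mp ho
          omega
        exact Dvd.dvd.mul_right hn1 _
    have hg2 : 2 * g = (n - 1) * (s - 1) := by
      rw [hg]
      exact Nat.mul_div_cancel' hpar
    have hg2' : 2 * (g : ℤ) = ((n : ℤ) - 1) * ((s : ℤ) - 1) := by
      zify [l1, l2] at hg2
      exact hg2
    have hD2 : 2 * ∑ i : Fin g, ((g : ℤ) - 1 - (i.val : ℤ)) = (g : ℤ) * ((g : ℤ) - 1) := by
      rw [Fin.sum_univ_eq_sum_range (fun j => (g : ℤ) - 1 - (j : ℤ)) g]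
      rw [Finset.sum_sub_distrib, Finset.sum_const, Finset.card_range, nsmul_eq_mul]
      linear_combination (-1 : ℤ) * aux_sum_range_id g
    have hsplit2 : ∑ i : Fin g, ((w i : ℤ) - ((g : ℤ) - 1 - (i.val : ℤ)))
        = (∑ i : Fin g, ((w i : ℕ) : ℤ)) - ∑ i : Fin g, ((g : ℤ) - 1 - (i.val : ℤ)) := by
      rw [Finset.sum_sub_distrib]
    have h24 : 24 * ∑ i : Fin g, ((w i : ℤ) - ((g : ℤ) - 1 - (i.val : ℤ)))
        = ((n : ℤ) ^ 2 - 1) * ((s : ℤ) ^ 2 - 1) := by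
      rw [hsplit2]
      linear_combination 2 * hT12 - 24 * hc - 12 * hD2
        - (6 * (g : ℤ) + 3 * ((n : ℤ) - 1) * ((s : ℤ) - 1) - 6) * hg2'
    rw [← h24]
    exact (Int.mul_ediv_cancel_left _ (by norm_num)).symm
end
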